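/- arXiv:math/9903186 — 4 statements merged into one kernel-verified Lean document; each statement's English description precedes it below -/
import Mathlib

section
/- Let H be a complex separable Hilbert space and let M : ℂ₊ → B(H) be a Herglotz operator. If M(z₀) has a bounded inverse M(z₀)⁻¹ ∈ B(H) for some point z₀ in the open upper half-plane ℂ₊, then M(z) has a bounded inverse M(z)⁻¹ ∈ B(H) for every z ∈ ℂ₊. -/
open Complex Filter MeasureTheory TopologicalSpace ContinuousLinearMap
open scoped InnerProductSpace Topology

noncomputable section

namespace SpectralShift

variable {H : Type*} [NormedAddCommGroup H] [InnerProductSpace ℂ H] [CompleteSpace H]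

/-- The imaginary part `(T - T*)/(2i)` of a bounded operator. -/
def imPart (T : H →L[ℂ] H) : H →L[ℂ] H :=
  ((2 * Complex.I)⁻¹ : ℂ) • (T - ContinuousLinearMap.adjoint T)

/-- An operator-valued Herglotz function: analytic on the open upper half-plane with
nonnegative imaginary part there. -/
def IsHerglotz (M : ℂ → H →L[ℂ] H) : Prop :=
  DifferentiableOn ℂ M {z : ℂ | 0 < z.im} ∧ ∀ z : ℂ, 0 < z.im → (imPart (M z)).IsPositive

/-- The integrand `(T + iλ)⁻¹ - (1 + iλ)⁻¹ I` in the integral representation of `log T`. -/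
def logIntegrand (T : H →L[ℂ] H) (t : ℝ) : H →L[ℂ] H :=
  Ring.inverse (T + ((t : ℂ) * Complex.I) • (1 : H →L[ℂ] H)) -
    (((1 : ℂ) + (t : ℂ) * Complex.I)⁻¹) • (1 : H →L[ℂ] H)

/-- `log T = -i ∫₀^∞ ((T + iλ)⁻¹ - (1 + iλ)⁻¹ I) dλ` as a norm-convergent improper
Riemann integral, for a dissipative boundedly invertible `T`. -/
def opLog (T : H →L[ℂ] H) : H →L[ℂ] H :=
  limUnder atTop (fun R : ℝ => (-Complex.I) • ∫ t in (0:ℝ)..R, logIntegrand T t)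

/-- The logarithm `log S = (log S*)*` of an operator `S` with `-S` dissipative. -/
def opLogAnti (T : H →L[ℂ] H) : H →L[ℂ] H :=
  ContinuousLinearMap.adjoint (opLog (ContinuousLinearMap.adjoint T))

/-- The logarithm of a Herglotz-type operator family on `ℂ ∖ ℝ`, using `log T` in the
upper half-plane and the convention `log S = (log S*)*` in the lower half-plane. -/
def logHerg (Φ : ℂ → H →L[ℂ] H) (z : ℂ) : H →L[ℂ] H :=
  if 0 < z.im then opLog (Φ z) else opLogAnti (Φ z)

/-- The logarithm of an anti-Herglotz-type operator family on `ℂ ∖ ℝ` (nonpositive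
imaginary part in the upper half-plane). -/
def logAntiHerg (Φ : ℂ → H →L[ℂ] H) (z : ℂ) : H →L[ℂ] H :=
  if 0 < z.im then opLogAnti (Φ z) else opLog (Φ z)

/-- Trace class: absolute summability of the diagonal in every Hilbert basis. -/
def IsTraceClass (T : H →L[ℂ] H) : Prop :=
  ∀ (w : Set H) (b : HilbertBasis w ℂ H), Summable fun i => ‖⟪(b i : H), T (b i)⟫_ℂ‖

/-- The trace, computed in a fixed Hilbert basis (basis-independent for trace
class operators). -/
def trH (T : H →L[ℂ] H) : ℂ :=
  ∑' i, ⟪((exists_hilbertBasis ℂ H).choose_spec.choose i : H),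
    T ((exists_hilbertBasis ℂ H).choose_spec.choose i)⟫_ℂ

/-- The trace norm, via duality with bounded operators (the correct value for trace
class operators). -/
def traceNorm (T : H →L[ℂ] H) : ℝ :=
  ⨆ B : {B : H →L[ℂ] H // ‖B‖ ≤ 1}, ‖trH (T * (B : H →L[ℂ] H))‖

/-- Hilbert-Schmidt operators. -/
def IsHilbertSchmidt (K : H →L[ℂ] H) : Prop :=
  ∀ (w : Set H) (b : HilbertBasis w ℂ H), Summable fun i => ‖K (b i)‖ ^ 2

/-- A (possibly unbounded) self-adjoint operator in `H`: a densely defined symmetric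
operator possessing everywhere-defined bounded resolvents at every non-real point. -/
structure SelfAdjointOp (H : Type*) [NormedAddCommGroup H] [InnerProductSpace ℂ H]
    [CompleteSpace H] where
  dom : Submodule ℂ H
  dense_dom : Dense (dom : Set H)
  op : dom →ₗ[ℂ] H
  symmetric : ∀ x y : dom, ⟪op x, (y : H)⟫_ℂ = ⟪(x : H), op y⟫_ℂ
  resolvent : ℂ → H →L[ℂ] H
  resolvent_mem : ∀ {z : ℂ}, z.im ≠ 0 → ∀ x : H, resolvent z x ∈ dom
  op_resolvent : ∀ {z : ℂ} (hz : z.im ≠ 0) (x : H),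
    op ⟨resolvent z x, resolvent_mem hz x⟩ - z • resolvent z x = x
  resolvent_op : ∀ {z : ℂ} (hz : z.im ≠ 0) (x : dom),
    resolvent z (op x - z • (x : H)) = x

/-- `B = A + V` for a bounded operator `V` (with `dom B = dom A`). -/
def IsSumOf (B A : SelfAdjointOp H) (V : H →L[ℂ] H) : Prop :=
  B.dom = A.dom ∧ ∀ (x : H) (hxB : x ∈ B.dom) (hxA : x ∈ A.dom),
    B.op ⟨x, hxB⟩ = A.op ⟨x, hxA⟩ + V x

/-- `R` is the (bounded, everywhere defined) resolvent `(A - z)⁻¹` of `A` at `z`. -/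
def SelfAdjointOp.IsResolventAt (A : SelfAdjointOp H) (z : ℂ) (R : H →L[ℂ] H) : Prop :=
  (∀ x : H, R x ∈ A.dom) ∧
  (∀ (x : H) (hx : R x ∈ A.dom), A.op ⟨R x, hx⟩ - z • R x = x) ∧
  (∀ x : A.dom, R (A.op x - z • (x : H)) = x)

/-- `E` is the projection-valued spectral measure of the self-adjoint operator `A`. -/
def IsSpectralMeasure (A : SelfAdjointOp H) (E : Set ℝ → H →L[ℂ] H) : Prop :=
  (∀ B : Set ℝ, MeasurableSet B → IsSelfAdjoint (E B)) ∧
  (∀ B C : Set ℝ, MeasurableSet B → MeasurableSet C → E B * E C = E (B ∩ C)) ∧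
  (E Set.univ = 1) ∧
  (∀ (f : ℕ → Set ℝ), (∀ n, MeasurableSet (f n)) → Pairwise (Function.onFun Disjoint f) →
    ∀ x : H, HasSum (fun n => E (f n) x) (E (⋃ n, f n) x)) ∧
  ∃ μ : H → Measure ℝ,
    (∀ (f : H) (B : Set ℝ), MeasurableSet B → μ f B = ENNReal.ofReal (⟪f, E B f⟫_ℂ).re) ∧
    ∀ (z : ℂ), z.im ≠ 0 → ∀ f : H,
      ⟪f, A.resolvent z f⟫_ℂ = ∫ l : ℝ, ((l : ℂ) - z)⁻¹ ∂(μ f)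

/-- Invertibility of `T` restricted to the range of the orthogonal projection `P`
(for `T` commuting with `P`), with inverse `S` supported in `ran P`. -/
def InvertibleOn (T P : H →L[ℂ] H) : Prop :=
  ∃ S : H →L[ℂ] H, S * P = S ∧ P * S = S ∧ S * (T * P) = P ∧ (P * T) * S = P

/-- The spectral projection `J₊ = (I + J)/2` onto `H₊` for a self-adjoint unitary `J`. -/
def Jplus (J : H →L[ℂ] H) : H →L[ℂ] H := ((2 : ℂ)⁻¹) • (1 + J)

/-- The spectral projection `J₋ = (I - J)/2` onto `H₋` for a self-adjoint unitary `J`. -/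
def Jminus (J : H →L[ℂ] H) : H →L[ℂ] H := ((2 : ℂ)⁻¹) • (1 - J)

/-- `Φ₊(z) = I + J₊ K* (H₀ - z)⁻¹ K J₊`, the operator on `H` inducing `Φ₊(z)` on `H₊`
(and the identity on `H₋`). -/
def PhiPlus (H0 : SelfAdjointOp H) (J K : H →L[ℂ] H) (z : ℂ) : H →L[ℂ] H :=
  1 + Jplus J * (ContinuousLinearMap.adjoint K * H0.resolvent z * K) * Jplus J

/-- `Φ̃₋(z) = I - J₋ K* (H₊ - z)⁻¹ K J₋`, the operator on `H` inducing `Φ̃₋(z)` on `H₋`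
(and the identity on `H₊`). -/
def PhiMinusT (Hp : SelfAdjointOp H) (J K : H →L[ℂ] H) (z : ℂ) : H →L[ℂ] H :=
  1 - Jminus J * (ContinuousLinearMap.adjoint K * Hp.resolvent z * K) * Jminus J

/-! `M(z) + i` is invertible, its numerical range lying in `Im ≥ 1`, and
`M(z) = A(z) (M(z) + i)` with `A(z) = M(z) (M(z) + i)⁻¹`, so it suffices to invert `A(z)`.
Writing `x = (M + i) y` gives `Re ⟪x, A x⟫ = ‖M y‖² + Im ⟪y, M y⟫ ≥ ‖A x‖²`: `A` is an analytic
family of accretive operators, and invertibility of `A(z₀)` yields `Re ⟪x, A(z₀) x⟫ ≥ c ‖x‖²`.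
Each `w ↦ ⟪x, A(w) x⟫` is analytic with nonnegative real part, so Harnack's inequality on the
half-plane transfers this bound, with a constant independent of `x`, to `|⟪x, A(z) x⟫|`; an
operator whose numerical range stays away from `0` is invertible. -/

open ComplexConjugate

lemma im_cayley_pos {z₀ w : ℂ} (hz₀ : 0 < z₀.im) (hw : ‖w‖ < 1) :
    0 < ((z₀ - conj z₀ * w) / (1 - w)).im := by
  have hw2 : w.re * w.re + w.im * w.im < 1 := by
    rw [← Complex.normSq_apply, Complex.normSq_eq_norm_sq]
    nlinarith [norm_nonneg w]
  have hden : 0 < Complex.normSq (1 - w) := by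
    refine Complex.normSq_pos.2 (sub_ne_zero.2 fun h => ?_)
    simp [← h] at hw
  rw [Complex.div_im, ← sub_div]
  refine div_pos ?_ hden
  simp only [Complex.sub_im, Complex.sub_re, Complex.mul_im, Complex.mul_re,
    Complex.conj_re, Complex.conj_im, Complex.one_re, Complex.one_im]
  nlinarith

lemma sub_conj_ne_zero {z₀ z : ℂ} (hz₀ : 0 < z₀.im) (hz : 0 < z.im) : z - conj z₀ ≠ 0 :=
  fun h => by
    have := congrArg Complex.im h
    simp only [Complex.sub_im, Complex.conj_im, sub_neg_eq_add, Complex.zero_im] at this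
    linarith

lemma norm_sub_div_sub_conj_lt_one {z₀ z : ℂ} (hz₀ : 0 < z₀.im) (hz : 0 < z.im) :
    ‖(z - z₀) / (z - conj z₀)‖ < 1 := by
  rw [norm_div, div_lt_one (norm_pos_iff.2 (sub_conj_ne_zero hz₀ hz)),
    ← sq_lt_sq₀ (norm_nonneg _) (norm_nonneg _), ← Complex.normSq_eq_norm_sq, ← Complex.normSq_eq_norm_sq]
  simp only [Complex.normSq_apply, Complex.sub_re, Complex.sub_im, Complex.conj_re,
    Complex.conj_im]
  nlinarith [mul_pos hz₀ hz]

lemma norm_sub_le_norm_add_conj {u v : ℂ} (hu : 0 ≤ u.re) (hv : 0 ≤ v.re) :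
    ‖u - v‖ ≤ ‖u + conj v‖ := by
  rw [← sq_le_sq₀ (norm_nonneg _) (norm_nonneg _),
    ← Complex.normSq_eq_norm_sq, ← Complex.normSq_eq_norm_sq]
  simp only [Complex.normSq_apply, Complex.sub_re, Complex.sub_im, Complex.add_re,
    Complex.add_im, Complex.conj_re, Complex.conj_im]
  nlinarith [mul_nonneg hu hv]

lemma norm_le_of_mapsTo_closedBall_upperHalfPlane {g : ℂ → ℂ} {z₀ z : ℂ}
    (hg : DifferentiableOn ℂ g {w | 0 < w.im}) (hg₁ : ∀ w, 0 < w.im → ‖g w‖ ≤ 1)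
    (hg₀ : g z₀ = 0) (hz₀ : 0 < z₀.im) (hz : 0 < z.im) :
    ‖g z‖ ≤ ‖(z - z₀) / (z - conj z₀)‖ := by
  set c : ℂ → ℂ := fun w => (z₀ - conj z₀ * w) / (1 - w)
  have hden : ∀ w ∈ Metric.ball (0 : ℂ) 1, (1 : ℂ) - w ≠ 0 := fun w hw h => by
    simp [← sub_eq_zero.1 h] at hw
  have hc : Set.MapsTo c (Metric.ball 0 1) {w | 0 < w.im} := fun w hw =>
    im_cayley_pos hz₀ (mem_ball_zero_iff.1 hw)
  have hcd : DifferentiableOn ℂ c (Metric.ball 0 1) :=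
    ((differentiableOn_const _).sub (differentiableOn_id.const_mul _)).div
      ((differentiableOn_const _).sub differentiableOn_id) hden
  set w₁ := (z - z₀) / (z - conj z₀)
  have hw₁ : ‖w₁‖ < 1 := norm_sub_div_sub_conj_lt_one hz₀ hz
  have hcw₁ : c w₁ = z := by
    rw [div_eq_iff (hden w₁ (mem_ball_zero_iff.2 hw₁))]
    simp only [w₁]
    field_simp [sub_conj_ne_zero hz₀ hz]
    ring
  have := Complex.norm_le_norm_of_mapsTo_ball (hg.comp hcd hc)
    (fun w hw => mem_closedBall_zero_iff.2 (hg₁ _ (hc hw))) (by simp [c, hg₀]) hw₁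
  rwa [Function.comp_apply, hcw₁] at this

lemma harnack_upperHalfPlane {f : ℂ → ℂ} {z₀ z : ℂ}
    (hf : DifferentiableOn ℂ f {w | 0 < w.im}) (hre : ∀ w, 0 < w.im → 0 ≤ (f w).re)
    (hz₀ : 0 < z₀.im) (hz : 0 < z.im) :
    (1 - ‖(z - z₀) / (z - conj z₀)‖) * (f z₀).re ≤ (1 + ‖(z - z₀) / (z - conj z₀)‖) * ‖f z‖ := by
  set k := ‖(z - z₀) / (z - conj z₀)‖
  have hk : k < 1 := norm_sub_div_sub_conj_lt_one hz₀ hz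
  set a := f z₀
  rcases (hre z₀ hz₀).eq_or_lt with ha | ha
  · rw [← ha, mul_zero]
    positivity
  have hden : ∀ w, 0 < w.im → f w + conj a ≠ 0 := fun w hw h => by
    have := congrArg Complex.re h
    simp only [Complex.add_re, Complex.conj_re, Complex.zero_re] at this
    linarith [hre w hw]
  set φ : ℂ → ℂ := fun w => (f w - a) / (f w + conj a)
  have hφ : ‖φ z‖ ≤ k :=
    norm_le_of_mapsTo_closedBall_upperHalfPlane ((hf.sub_const a).div (hf.add_const _) hden)
      (fun w hw => by
        rw [norm_div]
        exact div_le_one_of_le₀ (norm_sub_le_norm_add_conj (hre w hw) ha.le) (norm_nonneg _))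
      (by simp [φ, a]) hz₀ hz
  have hinv : f z * (1 - φ z) = a + φ z * conj a := by
    simp only [φ]
    field_simp [hden z hz]
    ring
  calc (1 - k) * a.re ≤ (1 - k) * ‖a‖ :=
        mul_le_mul_of_nonneg_left (Complex.re_le_norm a) (by linarith)
    _ ≤ ‖a‖ - ‖φ z * conj a‖ := by
      rw [norm_mul, Complex.norm_conj]; nlinarith [norm_nonneg a]
    _ ≤ ‖a + φ z * conj a‖ := by simpa using norm_sub_norm_le a (-(φ z * conj a))
    _ = ‖f z‖ * ‖1 - φ z‖ := by rw [← hinv, norm_mul]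
    _ ≤ ‖f z‖ * (1 + k) := by
      gcongr
      exact (norm_sub_le _ _).trans (by rw [norm_one]; linarith)
    _ = (1 + k) * ‖f z‖ := mul_comm _ _

section NumericalRange

variable {𝕜 E : Type*} [RCLike 𝕜] [NormedAddCommGroup E] [InnerProductSpace 𝕜 E]

lemma antilipschitz_of_norm_inner_self_ge {A : E →L[𝕜] E} {c : ℝ} (hc : 0 < c)
    (h : ∀ x, c * ‖x‖ ^ 2 ≤ ‖⟪x, A x⟫_𝕜‖) : AntilipschitzWith (Real.toNNReal c⁻¹) A := by
  refine A.antilipschitz_of_bound fun x => ?_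
  rw [Real.coe_toNNReal _ (inv_nonneg.2 hc.le), le_inv_mul_iff₀ hc]
  rcases (norm_nonneg x).eq_or_lt with hx | hx
  · rw [← hx, mul_zero]
    exact norm_nonneg _
  · refine le_of_mul_le_mul_right ?_ hx
    calc c * ‖x‖ * ‖x‖ = c * ‖x‖ ^ 2 := by ring
      _ ≤ ‖⟪x, A x⟫_𝕜‖ := h x
      _ ≤ ‖A x‖ * ‖x‖ := (norm_inner_le_norm _ _).trans_eq (mul_comm _ _)

lemma isUnit_of_norm_inner_self_ge [CompleteSpace E] {A : E →L[𝕜] E} {c : ℝ} (hc : 0 < c)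
    (h : ∀ x, c * ‖x‖ ^ 2 ≤ ‖⟪x, A x⟫_𝕜‖) : IsUnit A := by
  have hA := antilipschitz_of_norm_inner_self_ge hc h
  have hA' := antilipschitz_of_norm_inner_self_ge (A := adjoint A) hc fun x => by
    rw [adjoint_inner_right, ← inner_conj_symm, RCLike.norm_conj]
    exact h x
  have hclosed : IsClosed (A.range : Set E) := by
    rw [LinearMap.coe_range, coe_coe]
    exact hA.isClosed_range A.uniformContinuous
  have : CompleteSpace A.range := hclosed.completeSpace_coe
  have hrange : A.range = ⊤ := by
    rw [← Submodule.orthogonal_eq_bot_iff, orthogonal_range]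
    exact LinearMap.ker_eq_bot.2 hA'.injective
  exact isUnit_iff_bijective.2 ⟨hA.injective, LinearMap.range_eq_top.1 hrange⟩

end NumericalRange

lemma exists_pos_mul_norm_le_of_isUnit {𝕜 E : Type*} [NontriviallyNormedField 𝕜]
    [NormedAddCommGroup E] [NormedSpace 𝕜 E] {T : E →L[𝕜] E} (hT : IsUnit T) :
    ∃ c > 0, ∀ x, c * ‖x‖ ≤ ‖T x‖ := by
  obtain ⟨u, rfl⟩ := hT
  refine ⟨(‖(↑u⁻¹ : E →L[𝕜] E)‖ + 1)⁻¹, by positivity, fun x => ?_⟩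
  rw [inv_mul_le_iff₀ (by positivity)]
  calc ‖x‖ = ‖(↑u⁻¹ : E →L[𝕜] E) ((u : E →L[𝕜] E) x)‖ := by
        rw [← mul_apply_eq_comp, u.inv_mul, one_apply_eq_self]
    _ ≤ ‖(↑u⁻¹ : E →L[𝕜] E)‖ * ‖(u : E →L[𝕜] E) x‖ := le_opNorm _ _
    _ ≤ (‖(↑u⁻¹ : E →L[𝕜] E)‖ + 1) * ‖(u : E →L[𝕜] E) x‖ := by gcongr; linarith

lemma isUnit_of_re_inner_self_ge_of_upperHalfPlane {E : Type*} [NormedAddCommGroup E]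
    [InnerProductSpace ℂ E] [CompleteSpace E] {A : ℂ → E →L[ℂ] E}
    (hA : DifferentiableOn ℂ A {w | 0 < w.im}) (hacc : ∀ w, 0 < w.im → ∀ x, 0 ≤ (⟪x, A w x⟫_ℂ).re)
    {z₀ : ℂ} (hz₀ : 0 < z₀.im) {δ : ℝ} (hδ : 0 < δ) (h₀ : ∀ x, δ * ‖x‖ ^ 2 ≤ (⟪x, A z₀ x⟫_ℂ).re)
    {z : ℂ} (hz : 0 < z.im) : IsUnit (A z) := by
  set k := ‖(z - z₀) / (z - conj z₀)‖
  have hk : k < 1 := norm_sub_div_sub_conj_lt_one hz₀ hz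
  have hk₀ : 0 ≤ k := norm_nonneg _
  refine isUnit_of_norm_inner_self_ge (c := (1 - k) / (1 + k) * δ)
    (mul_pos (div_pos (by linarith) (by linarith)) hδ) fun x => ?_
  have hx := harnack_upperHalfPlane (f := fun w => ⟪x, A w x⟫_ℂ)
    (((innerSL ℂ x).comp (apply ℂ E x)).differentiable.comp_differentiableOn hA)
    (fun w hw => hacc w hw x) hz₀ hz
  rw [div_mul_eq_mul_div, div_mul_eq_mul_div, div_le_iff₀ (by linarith)]
  nlinarith [mul_le_mul_of_nonneg_left (h₀ x) (sub_nonneg.2 hk.le)]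

lemma im_inner_self_nonneg_of_isPositive_imPart {T : H →L[ℂ] H} (hT : (imPart T).IsPositive)
    (x : H) : 0 ≤ (⟪x, T x⟫_ℂ).im := by
  have him : (⟪x, imPart T x⟫_ℂ).re = (⟪x, T x⟫_ℂ).im := by
    simp only [imPart, smul_apply, sub_apply, inner_smul_right, inner_sub_right,
      adjoint_inner_right]
    rw [← inner_conj_symm (T x) x, Complex.sub_conj, mul_comm, ← div_eq_mul_inv,
      mul_div_mul_right _ _ I_ne_zero, ← Complex.ofReal_ofNat, ← Complex.ofReal_div,
      Complex.ofReal_re, mul_div_cancel_left₀ _ two_ne_zero]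
  exact him ▸ hT.re_inner_nonneg_right x

lemma isUnit_add_I_smul_one_of_isPositive_imPart {T : H →L[ℂ] H}
    (hT : (imPart T).IsPositive) : IsUnit (T + I • 1) := by
  refine isUnit_of_norm_inner_self_ge one_pos fun x => ?_
  have him : (⟪x, (T + I • 1) x⟫_ℂ).im = (⟪x, T x⟫_ℂ).im + ‖x‖ ^ 2 := by
    simp [inner_self_eq_norm_sq_to_K, ← Complex.ofReal_pow]
  calc 1 * ‖x‖ ^ 2 ≤ (⟪x, (T + I • 1) x⟫_ℂ).im := by
        rw [him]; linarith [im_inner_self_nonneg_of_isPositive_imPart hT x]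
    _ ≤ ‖⟪x, (T + I • 1) x⟫_ℂ‖ := Complex.im_le_norm _

lemma norm_sq_apply_le_re_inner_mul_inverse {T : H →L[ℂ] H} (hT : (imPart T).IsPositive)
    (x : H) : ‖(T * Ring.inverse (T + I • 1)) x‖ ^ 2 ≤
      (⟪x, (T * Ring.inverse (T + I • 1)) x⟫_ℂ).re := by
  have hunit := isUnit_add_I_smul_one_of_isPositive_imPart hT
  obtain ⟨y, rfl⟩ := (isUnit_iff_bijective.1 hunit).2 x
  have hy : Ring.inverse (T + I • 1) ((T + I • 1) y) = y := by
    rw [← mul_apply_eq_comp, Ring.inverse_mul_cancel _ hunit, one_apply_eq_self]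
  rw [mul_apply_eq_comp, hy]
  simp only [add_apply, smul_apply, one_apply_eq_self, inner_add_left, inner_smul_left,
    inner_self_eq_norm_sq_to_K, coe_algebraMap, ← ofReal_pow, conj_I, neg_mul, add_re, ofReal_re,
    neg_re, mul_re, I_re, zero_mul, I_im, one_mul, zero_sub, neg_neg, le_add_iff_nonneg_right]
  exact im_inner_self_nonneg_of_isPositive_imPart hT y

theorem herglotz_isUnit_of_isUnit_general
    (M : ℂ → H →L[ℂ] H) (hM : IsHerglotz M)
    (z₀ : ℂ) (hz₀ : 0 < z₀.im) (hM₀ : IsUnit (M z₀)) :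
    ∀ z : ℂ, 0 < z.im → IsUnit (M z) := by
  obtain ⟨hMd, hMpos⟩ := hM
  have hunit : ∀ w, 0 < w.im → IsUnit (M w + I • 1) := fun w hw =>
    isUnit_add_I_smul_one_of_isPositive_imPart (hMpos w hw)
  set A : ℂ → H →L[ℂ] H := fun w => M w * Ring.inverse (M w + I • 1)
  have hA : DifferentiableOn ℂ A {w | 0 < w.im} := hMd.mul ((hMd.add_const _).inverse hunit)
  have hA_acc : ∀ w, 0 < w.im → ∀ x, ‖A w x‖ ^ 2 ≤ (⟪x, A w x⟫_ℂ).re := fun w hw =>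
    norm_sq_apply_le_re_inner_mul_inverse (hMpos w hw)
  obtain ⟨c, hc, hc₀⟩ := exists_pos_mul_norm_le_of_isUnit (T := A z₀)
    (hM₀.mul (isUnit_ringInverse.2 (hunit z₀ hz₀)))
  have hA₀ : ∀ x, c ^ 2 * ‖x‖ ^ 2 ≤ (⟪x, A z₀ x⟫_ℂ).re := fun x =>
    le_trans (by rw [← mul_pow]; gcongr; exact hc₀ x) (hA_acc z₀ hz₀ x)
  intro z hz
  have hAz : IsUnit (A z) := isUnit_of_re_inner_self_ge_of_upperHalfPlane hA
    (fun w hw x => (sq_nonneg _).trans (hA_acc w hw x)) hz₀ (pow_pos hc 2) hA₀ hz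
  have hMA : M z = A z * (M z + I • 1) := by
    rw [mul_assoc, Ring.inverse_mul_cancel _ (hunit z hz), mul_one]
  exact hMA ▸ hAz.mul (hunit z hz)

/-- Lemma 2.3: if an operator-valued Herglotz function is boundedly invertible at one
point of the open upper half-plane, it is boundedly invertible everywhere on it. -/
theorem herglotz_isUnit_of_isUnit [SeparableSpace H]
    (M : ℂ → H →L[ℂ] H) (hM : IsHerglotz M)
    (z₀ : ℂ) (hz₀ : 0 < z₀.im) (hM₀ : IsUnit (M z₀)) :
    ∀ z : ℂ, 0 < z.im → IsUnit (M z) :=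
  herglotz_isUnit_of_isUnit_general M hM z₀ hz₀ hM₀

end SpectralShift
end
end

section
/- Let T ∈ B(H) be dissipative (Im(T) ≥ 0) with T⁻¹ ∈ B(H). Then the improper Riemann integral log(T) = −i ∫₀^∞ dλ ((T + iλ I_H)⁻¹ − (1 + iλ)⁻¹ I_H) converges in the operator norm of B(H), so log(T) ∈ B(H); moreover, if T = z I_H for some z ∈ ℂ₊, then log(T) = log(z) I_H, where log(z) is the principal branch of the complex logarithm (with argument in (0,π) on ℂ₊). -/
open Complex Filter MeasureTheory TopologicalSpace ContinuousLinearMap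
open scoped InnerProductSpace Topology

noncomputable section

namespace SpectralShift

variable {H : Type*} [NormedAddCommGroup H] [InnerProductSpace ℂ H] [CompleteSpace H]

/-! For `t > 0` dissipativity gives `Im ⟪x, (T + it) x⟫ ≥ t ‖x‖²`, so `T + it` is invertible
with `‖(T + it)⁻¹‖ ≤ 1 / t`. The scalar term `(1 + it)⁻¹` is the same resolvent for the
dissipative operator `1`, so by the resolvent identity the integrand is
`(T + it)⁻¹ (1 - T) (1 + it)⁻¹ = O(t⁻²)`; being continuous on `[0, ∞)` (at `t = 0` because
`T` is invertible), it is integrable on `(0, ∞)`.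
For `T = z • 1` the scalar integrand is the derivative of `-i (log (z + it) - log (1 + it))`, and
`log (z + iR) - log (1 + iR) → 0` because both terms are `log R + log i + o(1)`. -/

theorem ringInverse_smul_one {𝕜 A : Type*} [Field 𝕜] [Ring A] [Algebra 𝕜 A] (c : 𝕜) :
    Ring.inverse (c • (1 : A)) = c⁻¹ • 1 := by
  rcases eq_or_ne c 0 with rfl | hc
  · simp
  · have hu : c • (1 : A) = ((Units.mk0 c hc).map (algebraMap 𝕜 A).toMonoidHom : A) := by
      simp [Algebra.algebraMap_eq_smul_one]
    rw [hu, Ring.inverse_unit]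
    simp [Algebra.algebraMap_eq_smul_one]

theorem norm_ringInverse_le_of_antilipschitz {𝕜 E : Type*} [NontriviallyNormedField 𝕜]
    [NormedAddCommGroup E] [NormedSpace 𝕜 E] {f : E →L[𝕜] E} (hf : IsUnit f) {K : NNReal}
    (hK : AntilipschitzWith K f) : ‖Ring.inverse f‖ ≤ K :=
  opNorm_le_bound _ K.2 fun y => by
    have h := hK.le_mul_norm (map_zero f) (Ring.inverse f y)
    rwa [← mul_apply_eq_comp, Ring.mul_inverse_cancel _ hf, one_apply_eq_self] at h

section BanachAlgebra

variable {A : Type*} [NormedRing A] [NormedAlgebra ℂ A]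

def iShift (a : A) (t : ℝ) : A := a + ((t : ℂ) * I) • 1

theorem continuous_iShift (a : A) : Continuous (iShift a) := by
  unfold iShift
  fun_prop

theorem iShift_smul_one (z : ℂ) (t : ℝ) : iShift (z • (1 : A)) t = (z + t * I) • 1 := by
  rw [iShift, add_smul]

theorem iShift_one (t : ℝ) : iShift (1 : A) t = (1 + t * I) • 1 := by
  rw [← iShift_smul_one, one_smul]

theorem continuousAt_ringInverse_iShift [CompleteSpace A] {a : A} {t : ℝ}
    (h : IsUnit (iShift a t)) : ContinuousAt (fun s => Ring.inverse (iShift a s)) t := by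
  obtain ⟨u, hu⟩ := h
  exact (hu ▸ NormedRing.inverse_continuousAt u).comp (continuous_iShift a).continuousAt

end BanachAlgebra

theorem inner_imPart_apply_self (T : H →L[ℂ] H) (x : H) :
    ⟪imPart T x, x⟫_ℂ = (⟪x, T x⟫_ℂ).im := by
  rw [imPart, smul_apply, sub_apply, inner_smul_left, inner_sub_left, adjoint_inner_left,
    ← inner_conj_symm (T x) x, ← neg_sub, Complex.sub_conj]
  apply Complex.ext <;> simp

theorem le_norm_inner_iShift_apply {T : H →L[ℂ] H} (hT : (imPart T).IsPositive) (t : ℝ)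
    (x : H) : ‖x‖ ^ 2 * t ≤ ‖⟪iShift T t x, x⟫_ℂ‖ := by
  have hdiss : 0 ≤ (⟪x, T x⟫_ℂ).im := by
    simpa [inner_imPart_apply_self] using hT.re_inner_nonneg_left x
  have him : (⟪x, iShift T t x⟫_ℂ).im = (⟪x, T x⟫_ℂ).im + t * ‖x‖ ^ 2 := by
    simp [iShift, inner_self_eq_norm_sq_to_K, ← ofReal_pow]
  calc ‖x‖ ^ 2 * t ≤ (⟪x, iShift T t x⟫_ℂ).im := by linarith
    _ ≤ ‖⟪x, iShift T t x⟫_ℂ‖ := Complex.im_le_norm _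
    _ = ‖⟪iShift T t x, x⟫_ℂ‖ := norm_inner_symm _ _

theorem isUnit_iShift {T : H →L[ℂ] H} (hT : (imPart T).IsPositive) {t : ℝ} (ht : 0 < t) :
    IsUnit (iShift T t) :=
  isUnit_of_forall_le_norm_inner_map _ (c := ⟨t, ht.le⟩) ht (le_norm_inner_iShift_apply hT t)

theorem norm_ringInverse_iShift_le {T : H →L[ℂ] H} (hT : (imPart T).IsPositive) {t : ℝ}
    (ht : 0 < t) : ‖Ring.inverse (iShift T t)‖ ≤ t⁻¹ :=
  norm_ringInverse_le_of_antilipschitz (isUnit_iShift hT ht)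
    (antilipschitz_of_forall_le_inner_map _ (c := ⟨t, ht.le⟩) ht
      (le_norm_inner_iShift_apply hT t))

theorem isPositive_imPart_one : (imPart (1 : H →L[ℂ] H)).IsPositive := by
  simp [imPart, adjoint_one]

theorem isUnit_iShift_of_nonneg {T : H →L[ℂ] H} (hT : (imPart T).IsPositive) (hTinv : IsUnit T)
    {t : ℝ} (ht : 0 ≤ t) : IsUnit (iShift T t) := by
  rcases ht.eq_or_lt with rfl | ht
  · simpa [iShift] using hTinv
  · exact isUnit_iShift hT ht

theorem logIntegrand_eq_sub (T : H →L[ℂ] H) (t : ℝ) :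
    logIntegrand T t = Ring.inverse (iShift T t) - Ring.inverse (iShift 1 t) := by
  rw [logIntegrand, iShift_one, ringInverse_smul_one]
  rfl

theorem norm_logIntegrand_le {T : H →L[ℂ] H} (hT : (imPart T).IsPositive) {t : ℝ} (ht : 0 < t) :
    ‖logIntegrand T t‖ ≤ ‖1 - T‖ / t ^ 2 := by
  have hunit : IsUnit (iShift T t) ↔ IsUnit (iShift (1 : H →L[ℂ] H) t) :=
    iff_of_true (isUnit_iShift hT ht) (isUnit_iShift isPositive_imPart_one ht)
  have hdiff : iShift (1 : H →L[ℂ] H) t - iShift T t = 1 - T := add_sub_add_right_eq_sub _ _ _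
  rw [logIntegrand_eq_sub, Ring.inverse_sub_inverse hunit, hdiff]
  calc _ ≤ ‖Ring.inverse (iShift T t)‖ * ‖1 - T‖ * ‖Ring.inverse (iShift 1 t)‖ := norm_mul₃_le
    _ ≤ t⁻¹ * ‖1 - T‖ * t⁻¹ := by
      gcongr
      exacts [norm_ringInverse_iShift_le hT ht, norm_ringInverse_iShift_le isPositive_imPart_one ht]
    _ = ‖1 - T‖ / t ^ 2 := by field_simp

theorem continuousOn_logIntegrand {T : H →L[ℂ] H} (hT : (imPart T).IsPositive)
    (hTinv : IsUnit T) : ContinuousOn (logIntegrand T) (Set.Ici 0) := fun t ht => by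
  simp only [funext (logIntegrand_eq_sub T)]
  exact ((continuousAt_ringInverse_iShift (isUnit_iShift_of_nonneg hT hTinv ht)).sub
    (continuousAt_ringInverse_iShift
      (isUnit_iShift_of_nonneg isPositive_imPart_one isUnit_one ht))).continuousWithinAt

theorem integrableOn_logIntegrand {T : H →L[ℂ] H} (hT : (imPart T).IsPositive)
    (hTinv : IsUnit T) : IntegrableOn (logIntegrand T) (Set.Ioi 0) := by
  have hdecay : logIntegrand T =O[atTop] fun t : ℝ => t ^ (-2 : ℝ) := by
    refine Asymptotics.IsBigO.of_bound ‖1 - T‖ ?_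
    filter_upwards [eventually_gt_atTop 0] with t ht
    rw [Real.norm_of_nonneg (by positivity), Real.rpow_neg ht.le, Real.rpow_two, ← div_eq_mul_inv]
    exact norm_logIntegrand_le hT ht
  refine (LocallyIntegrableOn.integrableOn_of_isBigO_atTop ?_ hdecay ?_).mono_set
    Set.Ioi_subset_Ici_self
  · exact (continuousOn_logIntegrand hT hTinv).locallyIntegrableOn measurableSet_Ici
  · exact integrableAtFilter_rpow_atTop_iff.mpr (by norm_num)

theorem logIntegrand_smul_one (z : ℂ) (t : ℝ) :
    logIntegrand (z • (1 : H →L[ℂ] H)) t = ((z + t * I)⁻¹ - (1 + t * I)⁻¹) • 1 := by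
  rw [logIntegrand_eq_sub, iShift_smul_one, iShift_one, ringInverse_smul_one,
    ringInverse_smul_one, sub_smul]

theorem add_mul_I_mem_slitPlane {w : ℂ} (hw : w ∈ slitPlane) (hw' : 0 ≤ w.im) {t : ℝ}
    (ht : 0 ≤ t) : w + t * I ∈ slitPlane := by
  rcases hw'.eq_or_lt with hw' | hw'
  · exact Or.inl (by simpa [mem_slitPlane_iff, ← hw'] using hw)
  · exact Or.inr (by simp; positivity)

theorem intervalIntegrable_inv_add_mul_I {w : ℂ} (hw : w ∈ slitPlane) (hw' : 0 ≤ w.im) {R : ℝ}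
    (hR : 0 ≤ R) : IntervalIntegrable (fun t : ℝ => (w + t * I)⁻¹) volume 0 R := by
  refine ContinuousOn.intervalIntegrable ?_
  rw [Set.uIcc_of_le hR]
  exact (Continuous.continuousOn (by fun_prop)).inv₀
    fun t ht => slitPlane_ne_zero (add_mul_I_mem_slitPlane hw hw' ht.1)

theorem integral_inv_add_mul_I {w : ℂ} (hw : w ∈ slitPlane) (hw' : 0 ≤ w.im) {R : ℝ}
    (hR : 0 ≤ R) : ∫ t in (0 : ℝ)..R, (w + t * I)⁻¹ = -I * (log (w + R * I) - log w) := by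
  have hderiv : ∀ t ∈ Set.uIcc 0 R,
      HasDerivAt (fun s : ℝ => -I * log (w + s * I)) (w + t * I)⁻¹ t := by
    intro t ht
    rw [Set.uIcc_of_le hR] at ht
    have h := ((((hasDerivAt_id t).ofReal_comp.mul_const I).const_add w).clog_real
      (add_mul_I_mem_slitPlane hw hw' ht.1)).const_mul (-I)
    refine h.congr_deriv ?_
    simp only [id, ofReal_one, one_mul]
    rw [← mul_div_assoc, neg_mul, ← sq, I_sq, neg_neg, one_div]
  rw [intervalIntegral.integral_eq_sub_of_hasDerivAt hderiv
    (intervalIntegrable_inv_add_mul_I hw hw' hR)]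
  simp only [ofReal_zero, zero_mul, add_zero]
  ring

theorem tendsto_log_add_mul_I_sub_log (w : ℂ) :
    Tendsto (fun R : ℝ => log (w + R * I) - Real.log R) atTop (𝓝 (log I)) := by
  have hlim : Tendsto (fun R : ℝ => w * ((R⁻¹ : ℝ) : ℂ) + I) atTop (𝓝 I) := by
    simpa using (tendsto_inv_atTop_zero.ofReal.const_mul w).add_const I
  refine ((continuousAt_clog (Or.inr (by simp))).tendsto.comp hlim).congr' ?_
  filter_upwards [eventually_gt_atTop 0, hlim.eventually_ne I_ne_zero] with R hR hne
  have hscale : w + R * I = R * (w * ((R⁻¹ : ℝ) : ℂ) + I) := by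
    have hR' : (R : ℂ) ≠ 0 := ofReal_ne_zero.mpr hR.ne'
    push_cast
    field_simp
  rw [Function.comp_apply, hscale, log_ofReal_mul hR hne, add_sub_cancel_left]

theorem tendsto_integral_inv_add_mul_I_sub_inv {z : ℂ} (hz : z ∈ slitPlane) (hz' : 0 ≤ z.im) :
    Tendsto (fun R : ℝ => -I * ∫ t in (0 : ℝ)..R, ((z + t * I)⁻¹ - (1 + t * I)⁻¹))
      atTop (𝓝 (log z)) := by
  have hlim := (tendsto_log_add_mul_I_sub_log z).sub (tendsto_log_add_mul_I_sub_log 1)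
  rw [sub_self] at hlim
  rw [← sub_zero (log z)]
  refine (tendsto_const_nhds.sub hlim).congr' ?_
  filter_upwards [eventually_ge_atTop 0] with R hR
  have hone : (1 : ℂ) ∈ slitPlane := one_mem_slitPlane
  rw [intervalIntegral.integral_sub (intervalIntegrable_inv_add_mul_I hz hz' hR)
      (intervalIntegrable_inv_add_mul_I hone (by simp) hR),
    integral_inv_add_mul_I hz hz' hR, integral_inv_add_mul_I hone (by simp) hR, log_one]
  linear_combination (log z + log (1 + R * I) - log (z + R * I)) * I_sq

theorem opLog_converges_general
    (T : H →L[ℂ] H) (hT : (imPart T).IsPositive) (hTinv : IsUnit T) :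
    ∃ L : H →L[ℂ] H,
      Tendsto (fun R : ℝ => (-Complex.I) • ∫ t in (0:ℝ)..R, logIntegrand T t) atTop (𝓝 L) ∧
      ∀ z : ℂ, 0 < z.im → T = z • (1 : H →L[ℂ] H) →
        L = Complex.log z • (1 : H →L[ℂ] H) := by
  have hconv := (intervalIntegral_tendsto_integral_Ioi 0 (integrableOn_logIntegrand hT hTinv)
    tendsto_id).const_smul (-I)
  refine ⟨_, hconv, fun z hz hTz => tendsto_nhds_unique hconv ?_⟩
  subst hTz
  simp only [logIntegrand_smul_one, intervalIntegral.integral_smul_const, smul_smul]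
  exact (tendsto_integral_inv_add_mul_I_sub_inv (mem_slitPlane_iff.mpr (Or.inr hz.ne'))
    hz.le).smul_const 1

/-- Lemma 2.4 (i), (ii): for a dissipative boundedly invertible `T`, the improper Riemann
integral defining `log T` converges in operator norm; for `T = z·I` with `Im z > 0` its
value is `(log z)·I` with the principal branch of the logarithm. -/
theorem opLog_converges [SeparableSpace H]
    (T : H →L[ℂ] H) (hT : (imPart T).IsPositive) (hTinv : IsUnit T) :
    ∃ L : H →L[ℂ] H,
      Tendsto (fun R : ℝ => (-Complex.I) • ∫ t in (0:ℝ)..R, logIntegrand T t) atTop (𝓝 L) ∧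
      ∀ z : ℂ, 0 < z.im → T = z • (1 : H →L[ℂ] H) →
        L = Complex.log z • (1 : H →L[ℂ] H) :=
  opLog_converges_general T hT hTinv

end SpectralShift
end
end

section
/- Let H₀ be a self-adjoint (densely defined, possibly unbounded) operator in the complex separable Hilbert space H, J ∈ B(H) self-adjoint with J² = I_H, and K ∈ B₂(H) Hilbert–Schmidt; set V = K J K* and H = H₀ + V with dom(H) = dom(H₀). Then Φ(z) = J + K*(H₀ − z)⁻¹K, defined for z ∈ ℂ∖ℝ, is a Herglotz operator on ℂ₊ (analytic with Im(Φ(z)) ≥ 0 for Im z > 0), Φ(z) is boundedly invertible for all z ∈ ℂ∖ℝ, and Φ(z)⁻¹ = J − J K*(H − z)⁻¹K J. -/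
/-!
The first resolvent identity `R(w) - R(z) = (w - z) R(z) R(w)` together with `R(z)* = R(z̄)`
gives `Im R(z) = Im z · R(z)* R(z)`, so `Im Φ(z) = K* (Im R₀(z)) K ≥ 0` in the upper
half-plane; analyticity of `R₀` comes from the Neumann series
`R(z) = (1 - (z - z₀) R(z₀))⁻¹ R(z₀)` near `z₀`.
For the inverse, the second resolvent identity `R₀ - R = R₀ V R = R V R₀` with `V = K J K*`
and `J² = 1` makes `J - J K* R K J` a two-sided inverse of `Φ(z)` by direct expansion.
-/

open Complex Filter MeasureTheory TopologicalSpace ContinuousLinearMap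
open scoped InnerProductSpace Topology

noncomputable section

namespace SpectralShift

variable {H : Type*} [NormedAddCommGroup H] [InnerProductSpace ℂ H] [CompleteSpace H]

open scoped ComplexConjugate

lemma imPart_add_of_isSelfAdjoint {J : H →L[ℂ] H} (hJ : IsSelfAdjoint J) (T : H →L[ℂ] H) :
    imPart (J + T) = imPart T := by
  rw [imPart, imPart, map_add, hJ.adjoint_eq, add_sub_add_left_eq_sub]

lemma imPart_adjoint_mul_mul (S T : H →L[ℂ] H) :
    imPart (adjoint S * T * S) = adjoint S * imPart T * S := by
  simp only [imPart, ← star_eq_adjoint, star_mul, star_star, mul_assoc, mul_sub, sub_mul,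
    mul_smul_comm, smul_mul_assoc]

namespace SelfAdjointOp

variable (A : SelfAdjointOp H)

lemma resolvent_apply_eq_of_op_sub_smul {z : ℂ} (hz : z.im ≠ 0) {u y : H} (hu : u ∈ A.dom)
    (h : A.op ⟨u, hu⟩ - z • u = y) : A.resolvent z y = u :=
  h ▸ A.resolvent_op hz ⟨u, hu⟩

theorem resolvent_sub_resolvent {z w : ℂ} (hz : z.im ≠ 0) (hw : w.im ≠ 0) :
    A.resolvent w - A.resolvent z = (w - z) • (A.resolvent z * A.resolvent w) := by
  ext x
  have key : A.resolvent z (x + (w - z) • A.resolvent w x) = A.resolvent w x :=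
    A.resolvent_apply_eq_of_op_sub_smul hz (A.resolvent_mem hw x) <| by
      linear_combination (norm := module) A.op_resolvent hw x
  conv_lhs => rw [sub_apply, ← key]
  rw [map_add, map_smul, add_sub_cancel_left]
  rfl

theorem adjoint_resolvent {z : ℂ} (hz : z.im ≠ 0) :
    adjoint (A.resolvent z) = A.resolvent (conj z) := by
  have hz' : (conj z).im ≠ 0 := by simpa using hz
  refine ((eq_adjoint_iff _ _).mpr fun x y => ?_).symm
  let u : A.dom := ⟨A.resolvent (conj z) x, A.resolvent_mem hz' x⟩
  let v : A.dom := ⟨A.resolvent z y, A.resolvent_mem hz y⟩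
  calc ⟪(u : H), y⟫_ℂ = ⟪(u : H), A.op v - z • (v : H)⟫_ℂ := by
        rw [A.op_resolvent hz y]
    _ = ⟪A.op u - conj z • (u : H), (v : H)⟫_ℂ := by
      rw [inner_sub_left, inner_sub_right, inner_smul_left, inner_smul_right, A.symmetric,
        Complex.conj_conj]
    _ = ⟪x, A.resolvent z y⟫_ℂ := by rw [A.op_resolvent hz' x]

lemma eventually_resolvent_eq_inverse_mul {z₀ : ℂ} (hz₀ : z₀.im ≠ 0) :
    ∀ᶠ z in 𝓝 z₀,
      A.resolvent z = Ring.inverse (1 - (z - z₀) • A.resolvent z₀) * A.resolvent z₀ := by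
  have hunit : ∀ᶠ z in 𝓝 z₀, IsUnit (1 - (z - z₀) • A.resolvent z₀) := by
    have hcont : Continuous fun z : ℂ => 1 - (z - z₀) • A.resolvent z₀ := by fun_prop
    exact hcont.continuousAt.eventually_mem (Units.isOpen.mem_nhds (by simp))
  have him : ∀ᶠ z in 𝓝 z₀, z.im ≠ 0 := continuous_im.continuousAt.eventually_ne hz₀
  filter_upwards [hunit, him] with z hu hz
  have hmul : (1 - (z - z₀) • A.resolvent z₀) * A.resolvent z = A.resolvent z₀ := by
    rw [sub_mul, one_mul, smul_mul_assoc, ← A.resolvent_sub_resolvent hz₀ hz, sub_sub_cancel]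
  calc A.resolvent z
      = Ring.inverse (1 - (z - z₀) • A.resolvent z₀) *
          ((1 - (z - z₀) • A.resolvent z₀) * A.resolvent z) :=
        (Ring.inverse_mul_cancel_left _ _ hu).symm
    _ = _ := by rw [hmul]

theorem differentiableAt_resolvent {z₀ : ℂ} (hz₀ : z₀.im ≠ 0) :
    DifferentiableAt ℂ A.resolvent z₀ := by
  have hNeumann : DifferentiableAt ℂ
      (fun z => Ring.inverse (1 - (z - z₀) • A.resolvent z₀) * A.resolvent z₀) z₀ := by
    have hlin : DifferentiableAt ℂ (fun z : ℂ => 1 - (z - z₀) • A.resolvent z₀) z₀ := by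
      fun_prop
    have hinv := (differentiableAt_inverse (by simp)).comp z₀ hlin
    exact hinv.mul_const _
  exact hNeumann.congr_of_eventuallyEq (A.eventually_resolvent_eq_inverse_mul hz₀)

theorem imPart_resolvent {z : ℂ} (hz : z.im ≠ 0) :
    imPart (A.resolvent z) = (z.im : ℂ) • (adjoint (A.resolvent z) * A.resolvent z) := by
  have hz' : (conj z).im ≠ 0 := by simpa using hz
  rw [imPart, A.adjoint_resolvent hz, A.resolvent_sub_resolvent hz' hz, smul_smul,
    Complex.sub_conj]
  congr 1
  push_cast
  field_simp [Complex.I_ne_zero]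

theorem isHerglotz_add_adjoint_mul_resolvent_mul {J : H →L[ℂ] H} (hJ : IsSelfAdjoint J)
    (K : H →L[ℂ] H) : IsHerglotz fun z => J + adjoint K * A.resolvent z * K := by
  refine ⟨fun z hz => ?_, fun z hz => ?_⟩
  · exact ((differentiableAt_const J).add (((A.differentiableAt_resolvent hz.ne').const_mul
      (adjoint K)).mul_const K)).differentiableWithinAt
  · rw [imPart_add_of_isSelfAdjoint hJ, imPart_adjoint_mul_mul, A.imPart_resolvent hz.ne']
    have hpos := ((isPositive_adjoint_comp_self (A.resolvent z)).smul_of_nonneg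
      (Complex.zero_le_real.mpr hz.le)).adjoint_conj K
    simpa only [mul_def, comp_assoc] using hpos

end SelfAdjointOp

lemma IsSumOf.symm {B A : SelfAdjointOp H} {V : H →L[ℂ] H} (h : IsSumOf B A V) :
    IsSumOf A B (-V) :=
  ⟨h.1.symm, fun x hxA hxB => by rw [h.2 x hxB hxA, neg_apply, add_neg_cancel_right]⟩

theorem IsSumOf.resolvent_sub_resolvent {B A : SelfAdjointOp H} {V : H →L[ℂ] H}
    (h : IsSumOf B A V) {z : ℂ} (hz : z.im ≠ 0) :
    A.resolvent z - B.resolvent z = A.resolvent z * V * B.resolvent z := by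
  ext x
  have hu : B.resolvent z x ∈ A.dom := h.1 ▸ B.resolvent_mem hz x
  have key : A.resolvent z (x - V (B.resolvent z x)) = B.resolvent z x :=
    A.resolvent_apply_eq_of_op_sub_smul hz hu <| by
      linear_combination (norm := module) B.op_resolvent hz x - h.2 _ (B.resolvent_mem hz x) hu
  conv_lhs => rw [sub_apply, ← key]
  rw [map_sub, sub_sub_cancel]
  rfl

theorem IsSumOf.resolvent_sub_resolvent' {B A : SelfAdjointOp H} {V : H →L[ℂ] H}
    (h : IsSumOf B A V) {z : ℂ} (hz : z.im ≠ 0) :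
    A.resolvent z - B.resolvent z = B.resolvent z * V * A.resolvent z := by
  rw [← neg_sub, h.symm.resolvent_sub_resolvent hz, mul_neg, neg_mul, neg_neg]

section Ring

variable {R : Type*} [Ring R] {J K L X Y : R}

lemma add_mul_sub_eq_one (hJ : J * J = 1) (h : X - Y = X * (K * J * L) * Y) :
    (J + L * X * K) * (J - J * (L * Y * K) * J) = 1 := by
  calc _ = J * J - J * J * (L * Y * K) * J + L * X * K * J
        - L * (X * (K * J * L) * Y) * K * J := by noncomm_ring
    _ = 1 := by rw [hJ, ← h]; noncomm_ring

lemma sub_mul_add_eq_one (hJ : J * J = 1) (h : X - Y = Y * (K * J * L) * X) :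
    (J - J * (L * Y * K) * J) * (J + L * X * K) = 1 := by
  calc _ = J * J - J * (L * Y * K) * (J * J) + J * (L * X * K)
        - J * (L * (Y * (K * J * L) * X) * K) := by noncomm_ring
    _ = 1 := by rw [hJ, ← h]; noncomm_ring

end Ring

theorem phi_herglotz_and_inverse_general
    (H0 Hop : SelfAdjointOp H) (J K : H →L[ℂ] H)
    (hJ : IsSelfAdjoint J) (hJ2 : J * J = 1)
    (hsum : IsSumOf Hop H0 (K * J * ContinuousLinearMap.adjoint K)) :
    IsHerglotz (fun z => J + ContinuousLinearMap.adjoint K * H0.resolvent z * K) ∧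
    ∀ z : ℂ, z.im ≠ 0 →
      IsUnit (J + ContinuousLinearMap.adjoint K * H0.resolvent z * K) ∧
      Ring.inverse (J + ContinuousLinearMap.adjoint K * H0.resolvent z * K) =
        J - J * (ContinuousLinearMap.adjoint K * Hop.resolvent z * K) * J := by
  refine ⟨H0.isHerglotz_add_adjoint_mul_resolvent_mul hJ K, fun z hz => ?_⟩
  let Φ : (H →L[ℂ] H)ˣ :=
    ⟨_, _, add_mul_sub_eq_one hJ2 (hsum.resolvent_sub_resolvent hz),
      sub_mul_add_eq_one hJ2 (hsum.resolvent_sub_resolvent' hz)⟩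
  exact ⟨Φ.isUnit, Ring.inverse_unit Φ⟩

/-- Lemma 3.2 for `Φ`: under Hypothesis 3.1, `Φ(z) = J + K*(H₀-z)⁻¹K` is a Herglotz
operator, boundedly invertible for `z ∈ ℂ∖ℝ`, with
`Φ(z)⁻¹ = J - J K*(H-z)⁻¹K J` where `H = H₀ + KJK*`. -/
theorem phi_herglotz_and_inverse [SeparableSpace H]
    (H0 Hop : SelfAdjointOp H) (J K : H →L[ℂ] H)
    (hJ : IsSelfAdjoint J) (hJ2 : J * J = 1) (hK : IsHilbertSchmidt K)
    (hsum : IsSumOf Hop H0 (K * J * ContinuousLinearMap.adjoint K)) :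
    IsHerglotz (fun z => J + ContinuousLinearMap.adjoint K * H0.resolvent z * K) ∧
    ∀ z : ℂ, z.im ≠ 0 →
      IsUnit (J + ContinuousLinearMap.adjoint K * H0.resolvent z * K) ∧
      Ring.inverse (J + ContinuousLinearMap.adjoint K * H0.resolvent z * K) =
        J - J * (ContinuousLinearMap.adjoint K * Hop.resolvent z * K) * J :=
  phi_herglotz_and_inverse_general H0 Hop J K hJ hJ2 hsum

end SpectralShift
end
end

section
/- Let H₀ be self-adjoint in the complex separable Hilbert space H, K ∈ B(H) bounded, and for z ∈ ℂ∖ℝ set Φ(z) = I_H + K*(H₀ − z)⁻¹K. Then for every real λ < 0, the operator (λ I_H − Φ(z)) is boundedly invertible and (λ I_H − Φ(z))⁻¹ = −(1 − λ)⁻¹ (I_H − (1 − λ)⁻¹ K*(H₀ + (1 − λ)⁻¹ K K* − z)⁻¹ K), where H₀ + (1 − λ)⁻¹KK* is the self-adjoint operator on dom(H₀). -/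
open Complex Filter MeasureTheory TopologicalSpace ContinuousLinearMap
open scoped InnerProductSpace Topology

noncomputable section

namespace SpectralShift

variable {H : Type*} [NormedAddCommGroup H] [InnerProductSpace ℂ H] [CompleteSpace H]

/-- Equation (4.37): for `λ < 0` and `z ∈ ℂ∖ℝ`, `(λ - Φ(z))` is boundedly invertible
with `(λ - Φ(z))⁻¹ = -(1-λ)⁻¹ (I - (1-λ)⁻¹ K*(H₀ + (1-λ)⁻¹KK* - z)⁻¹ K)`. -/
theorem resolvent_of_phi [SeparableSpace H]
    (H0 Hl : SelfAdjointOp H) (K : H →L[ℂ] H) (lam : ℝ) (hlam : lam < 0)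
    (hsum : IsSumOf Hl H0 ((((1 : ℂ) - (lam : ℂ))⁻¹) •
      (K * ContinuousLinearMap.adjoint K)))
    (z : ℂ) (hz : z.im ≠ 0) :
    IsUnit ((lam : ℂ) • (1 : H →L[ℂ] H) -
      (1 + ContinuousLinearMap.adjoint K * H0.resolvent z * K)) ∧
    Ring.inverse ((lam : ℂ) • (1 : H →L[ℂ] H) -
        (1 + ContinuousLinearMap.adjoint K * H0.resolvent z * K)) =
      (-((1 : ℂ) - (lam : ℂ))⁻¹) • ((1 : H →L[ℂ] H) -
        (((1 : ℂ) - (lam : ℂ))⁻¹) •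
          (ContinuousLinearMap.adjoint K * Hl.resolvent z * K)) := by
  classical
  set c : ℂ := ((1 : ℂ) - (lam : ℂ))⁻¹ with hcdef
  set R0 : H →L[ℂ] H := H0.resolvent z with hR0
  set Rl : H →L[ℂ] H := Hl.resolvent z with hRl
  set A0 : H →L[ℂ] H := ContinuousLinearMap.adjoint K * R0 * K with hA0
  set Al : H →L[ℂ] H := ContinuousLinearMap.adjoint K * Rl * K with hAl
  have hc : ((1 : ℂ) - (lam : ℂ)) ≠ 0 := by
    have h1 : (1 - lam : ℝ) ≠ 0 := by linarith
    simpa using Complex.ofReal_ne_zero.mpr h1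
  have hc1 : c * ((1 : ℂ) - (lam : ℂ)) = 1 := inv_mul_cancel₀ hc
  have hdom : Hl.dom = H0.dom := hsum.1
  -- key resolvent identity 1 : Rl = R0 - c • (R0 * (K K*) * Rl)
  have key1 : Rl = R0 - c • (R0 * (K * ContinuousLinearMap.adjoint K) * Rl) := by
    ext x
    have hmem : Rl x ∈ Hl.dom := Hl.resolvent_mem hz x
    have hmem0 : Rl x ∈ H0.dom := hdom ▸ hmem
    have hop := hsum.2 (Rl x) hmem hmem0
    have h1 : Hl.op ⟨Rl x, hmem⟩ - z • Rl x = x := Hl.op_resolvent hz x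
    rw [hop] at h1
    simp only [ContinuousLinearMap.smul_apply] at h1
    have h2 : H0.op ⟨Rl x, hmem0⟩ - z • (Rl x) =
        x - c • (K * ContinuousLinearMap.adjoint K) (Rl x) := by
      have habel : H0.op ⟨Rl x, hmem0⟩ - z • (Rl x) =
          (H0.op ⟨Rl x, hmem0⟩ + c • (K * ContinuousLinearMap.adjoint K) (Rl x)
            - z • (Rl x)) - c • (K * ContinuousLinearMap.adjoint K) (Rl x) := by
        abel
      rw [habel, h1]
    have h3 := H0.resolvent_op hz ⟨Rl x, hmem0⟩
    simp only [h2] at h3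
    simp only [ContinuousLinearMap.sub_apply, ContinuousLinearMap.smul_apply,
      ContinuousLinearMap.mul_apply, map_sub, _root_.map_smul] at h3 ⊢
    exact h3.symm
  -- key resolvent identity 2 : Rl = R0 - c • (Rl * (K K*) * R0)
  have key2 : Rl = R0 - c • (Rl * (K * ContinuousLinearMap.adjoint K) * R0) := by
    ext x
    have hmem0 : R0 x ∈ H0.dom := H0.resolvent_mem hz x
    have hmem : R0 x ∈ Hl.dom := hdom ▸ hmem0
    have hop := hsum.2 (R0 x) hmem hmem0
    have h1 : H0.op ⟨R0 x, hmem0⟩ - z • R0 x = x := H0.op_resolvent hz x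
    have h2 : Hl.op ⟨R0 x, hmem⟩ - z • (R0 x) =
        x + c • (K * ContinuousLinearMap.adjoint K) (R0 x) := by
      rw [hop]
      simp only [ContinuousLinearMap.smul_apply]
      have habel : H0.op ⟨R0 x, hmem0⟩ + c • (K * ContinuousLinearMap.adjoint K) (R0 x)
          - z • (R0 x) = (H0.op ⟨R0 x, hmem0⟩ - z • (R0 x))
            + c • (K * ContinuousLinearMap.adjoint K) (R0 x) := by
        abel
      rw [habel, h1]
    have h3 := Hl.resolvent_op hz ⟨R0 x, hmem⟩
    simp only [h2] at h3
    simp only [ContinuousLinearMap.sub_apply, ContinuousLinearMap.smul_apply,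
      ContinuousLinearMap.mul_apply, map_add, _root_.map_smul] at h3 ⊢
    -- h3 : Rl x + c • Rl ((K K*) (R0 x)) = R0 x
    exact eq_sub_of_add_eq h3
  -- consequences on A's
  have hA1 : c • (A0 * Al) = A0 - Al := by
    have hstep : Al = A0 - c • (A0 * Al) := by
      calc Al = ContinuousLinearMap.adjoint K *
            (R0 - c • (R0 * (K * ContinuousLinearMap.adjoint K) * Rl)) * K := by
              rw [hAl, ← key1]
        _ = A0 - c • (A0 * Al) := by
              rw [mul_sub, sub_mul, mul_smul_comm, smul_mul_assoc]
              congr 1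
    have h' : c • (A0 * Al) + Al = A0 := by
      rw [add_comm]; exact eq_sub_iff_add_eq.mp hstep
    exact eq_sub_of_add_eq h' 
  have hA2 : c • (Al * A0) = A0 - Al := by
    have hstep : Al = A0 - c • (Al * A0) := by
      calc Al = ContinuousLinearMap.adjoint K *
            (R0 - c • (Rl * (K * ContinuousLinearMap.adjoint K) * R0)) * K := by
              rw [hAl, ← key2]
        _ = A0 - c • (Al * A0) := by
              rw [mul_sub, sub_mul, mul_smul_comm, smul_mul_assoc]
              congr 1
    have h' : c • (Al * A0) + Al = A0 := by
      rw [add_comm]; exact eq_sub_iff_add_eq.mp hstep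
    exact eq_sub_of_add_eq h' 
  -- the candidate inverse
  set T : H →L[ℂ] H := (lam : ℂ) • (1 : H →L[ℂ] H) - (1 + A0) with hT
  set S : H →L[ℂ] H := (-c) • ((1 : H →L[ℂ] H) - c • Al) with hS
  have hT' : T = ((lam : ℂ) - 1) • (1 : H →L[ℂ] H) - A0 := by
    rw [hT]; module
  have hcc : -c * ((lam : ℂ) - 1) = 1 := by
    have : -c * ((lam : ℂ) - 1) = c * ((1 : ℂ) - (lam : ℂ)) := by ring
    rw [this, hc1]
  have hTS : T * S = 1 := by
    have e1 : A0 * ((1 : H →L[ℂ] H) - c • Al) = Al := by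
      rw [mul_sub, mul_one, mul_smul_comm, hA1]
      abel
    have e2 : T * S = (-c) • (((lam : ℂ) - 1) • ((1 : H →L[ℂ] H) - c • Al) - Al) := by
      rw [hT', hS, mul_smul_comm, sub_mul, smul_mul_assoc, one_mul, e1]
    rw [e2, smul_sub, smul_smul, hcc, one_smul]
    module
  have hST : S * T = 1 := by
    have e1 : ((1 : H →L[ℂ] H) - c • Al) * A0 = Al := by
      rw [sub_mul, one_mul, smul_mul_assoc, hA2]
      abel
    have e2 : S * T = (-c) • (((lam : ℂ) - 1) • ((1 : H →L[ℂ] H) - c • Al) - Al) := by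
      rw [hT', hS, smul_mul_assoc, mul_sub, mul_smul_comm, mul_one, e1]
    rw [e2, smul_sub, smul_smul, hcc, one_smul]
    module
  have hunit : IsUnit T := ⟨⟨T, S, hTS, hST⟩, rfl⟩
  refine ⟨hunit, ?_⟩
  have : Ring.inverse T = S := by
    rw [show T = ((⟨T, S, hTS, hST⟩ : (H →L[ℂ] H)ˣ) : H →L[ℂ] H) from rfl,
      Ring.inverse_unit]
    rfl
  simpa [hT, hS, hA0, hAl, hR0, hRl, hcdef] using this

end SpectralShift
end
end
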